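/- arXiv:1307.1850 — 2 statements merged into one kernel-verified Lean document; each statement's English description precedes it below -/
import Mathlib

section
/- A Polish space X is Kσ (a countable union of compact sets) if and only if there is no closed subset of X homeomorphic to Baire space ℕ^ℕ; equivalently (Hurewicz): if X is Polish and not Kσ, then X contains a closed subset homeomorphic to ℕ^ℕ. -/
/-!
Baire space is not σ-compact: the `n`-th coordinate takes only finitely many values on a compact
set `Kₙ`, so a sequence avoiding these values diagonally lies in no `Kₙ`. Since σ-compactness
passes to closed subspaces, a σ-compact space has no closed copy of Baire space.

Conversely, let `X` be Polish and not σ-compact, and let `W` be the set of points with no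
σ-compact neighbourhood. By the Lindelöf property the other points are covered by one σ-compact
set, so `W` is nonempty and no piece `W ∩ B(x, r)` with `x ∈ W` is totally bounded (its closure
would be compact, making `B(x, r)` σ-compact). Hence every ball around a point of `W` contains an
infinite uniformly separated sequence of points of `W`; small closed balls around them are
pairwise disjoint, and a compact set meets only finitely many of them. Iterating this inside each
new ball gives a Lusin scheme whose induced map `ℕ^ℕ → X` is continuous, injective and has
compact preimages of compact sets; such a map is proper, hence a closed embedding.
-/

open Set Filter Metric Topology PiNat

theorem not_sigmaCompactSpace_nat_pi {β : Type*} [TopologicalSpace β] [DiscreteTopology β]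
    [Infinite β] : ¬ SigmaCompactSpace (ℕ → β) := by
  intro _
  obtain ⟨K, hK, hcover⟩ := SigmaCompactSpace.exists_compact_covering (X := ℕ → β)
  have hfin (n : ℕ) : ((fun x : ℕ → β ↦ x n) '' K n).Finite :=
    ((hK n).image (continuous_apply n)).finite_of_discrete
  choose x hx using fun n ↦ (hfin n).infinite_compl.nonempty
  obtain ⟨n, hn⟩ := mem_iUnion.1 (hcover ▸ mem_univ x)
  exact hx n ⟨x, hn, rfl⟩

theorem IsSigmaCompact.union {X : Type*} [TopologicalSpace X] {s t : Set X}
    (hs : IsSigmaCompact s) (ht : IsSigmaCompact t) : IsSigmaCompact (s ∪ t) := by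
  rw [union_eq_iUnion]
  exact isSigmaCompact_iUnion _ (Bool.forall_bool.2 ⟨ht, hs⟩)

theorem exists_isSigmaCompact_superset_of_forall_nhds {X : Type*} [TopologicalSpace X]
    [HereditarilyLindelofSpace X] {s : Set X} (h : ∀ x ∈ s, ∃ L ∈ 𝓝 x, IsSigmaCompact L) :
    ∃ L, IsSigmaCompact L ∧ s ⊆ L := by
  choose! L hL hLσ using h
  obtain ⟨t, htc, hts, hst⟩ := (HereditarilyLindelofSpace.isLindelof s).elim_nhds_subcover L hL
  exact ⟨⋃ x ∈ t, L x, isSigmaCompact_biUnion htc fun x hx ↦ hLσ x (hts x hx), hst⟩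

theorem exists_forall_not_totallyBounded_of_not_sigmaCompactSpace {X : Type*} [MetricSpace X]
    [CompleteSpace X] [HereditarilyLindelofSpace X] (hX : ¬ SigmaCompactSpace X) :
    ∃ W : Set X, W.Nonempty ∧ ∀ x ∈ W, ∀ r > 0, ¬ TotallyBounded (W ∩ ball x r) := by
  set W : Set X := {x | ∀ L ∈ 𝓝 x, ¬ IsSigmaCompact L}
  obtain ⟨L, hL, hWL⟩ : ∃ L, IsSigmaCompact L ∧ Wᶜ ⊆ L :=
    exists_isSigmaCompact_superset_of_forall_nhds fun x hx ↦ by simpa [W] using hx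
  refine ⟨W, ?_, fun x hx r hr hTB ↦ hx (closure (W ∩ ball x r) ∪ L) ?_ ?_⟩
  · by_contra! hW
    exact hX (isSigmaCompact_univ_iff.1 (hL.of_isClosed_subset isClosed_univ
      (by simpa [hW] using hWL)))
  · refine mem_of_superset (ball_mem_nhds x hr) fun y hy ↦ ?_
    by_cases hyW : y ∈ W
    · exact Or.inl (subset_closure ⟨hyW, hy⟩)
    · exact Or.inr (hWL hyW)
  · exact (hTB.closure.isCompact_of_isClosed isClosed_closure).isSigmaCompact.union hL

section PseudoMetric

variable {α : Type*} [PseudoMetricSpace α]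

theorem exists_separated_seq_of_not_totallyBounded {s : Set α} (h : ¬ TotallyBounded s) :
    ∃ ε > 0, ∃ u : ℕ → α, (∀ n, u n ∈ s) ∧ Pairwise fun m n ↦ ε ≤ dist (u m) (u n) := by
  obtain ⟨ε, hε, hs⟩ : ∃ ε > 0, ∀ t : Set α, t.Finite → ¬ s ⊆ ⋃ y ∈ t, ball y ε := by
    simpa [totallyBounded_iff] using h
  have hnext (t : Set α) (ht : t.Finite) : ∃ c, c ∈ s ∧ ∀ y ∈ t, ε ≤ dist c y := by
    obtain ⟨c, hcs, hct⟩ := not_subset.1 (hs t ht)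
    exact ⟨c, hcs, fun y hy ↦ not_lt.1 fun hcy ↦ hct (mem_biUnion hy hcy)⟩
  obtain ⟨u, hu⟩ := seq_of_forall_finite_exists hnext
  refine ⟨ε, hε, u, fun n ↦ (hu n).1, fun m n hmn ↦ ?_⟩
  rcases hmn.lt_or_gt with hlt | hlt
  · exact dist_comm (u n) (u m) ▸ (hu n).2 _ ⟨m, hlt, rfl⟩
  · exact (hu m).2 _ ⟨n, hlt, rfl⟩

theorem finite_setOf_closedBall_inter_nonempty {ι : Type*} {u : ι → α} {ε δ : ℝ}
    (hu : Pairwise fun m n ↦ ε ≤ dist (u m) (u n)) (hδ : 2 * δ < ε) {K : Set α}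
    (hK : IsCompact K) : {n | (closedBall (u n) δ ∩ K).Nonempty}.Finite := by
  refine Set.not_infinite.1 fun hinf ↦ ?_
  obtain ⟨t, htfin, hKt⟩ :=
    totallyBounded_iff.1 hK.totallyBounded ((ε - 2 * δ) / 2) (by linarith)
  have hnear (n : ι) (hn : (closedBall (u n) δ ∩ K).Nonempty) :
      ∃ y ∈ t, ∃ z ∈ closedBall (u n) δ, z ∈ ball y ((ε - 2 * δ) / 2) := by
    obtain ⟨z, hzn, hzK⟩ := hn
    obtain ⟨y, hyt, hzy⟩ := mem_iUnion₂.1 (hKt hzK)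
    exact ⟨y, hyt, z, hzn, hzy⟩
  have : Nonempty α := ⟨u hinf.nonempty.some⟩
  choose! g hgt z hzn hzg using hnear
  -- pigeonhole: two of the balls meet `K` near the same point of the finite net `t`
  obtain ⟨m, hm, n, hn, hmn, hg⟩ := hinf.exists_ne_map_eq_of_mapsTo hgt htfin
  have hzm := hzg m hm
  rw [hg] at hzm
  have := dist_triangle4 (u m) (z m) (z n) (u n)
  have := dist_triangle_right (z m) (z n) (g n)
  linarith [hu hmn, dist_comm (u m) (z m), mem_closedBall.1 (hzn m hm),
    mem_closedBall.1 (hzn n hn), mem_ball.1 hzm, mem_ball.1 (hzg n hn)]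

theorem exists_seq_closedBall_of_not_totallyBounded {s : Set α} {x : α} {r : ℝ}
    (h : ¬ TotallyBounded (s ∩ ball x (r / 2))) :
    ∃ ρ > 0, ρ ≤ r / 2 ∧ ∃ y : ℕ → α, (∀ n, y n ∈ s) ∧
      (∀ n, closedBall (y n) ρ ⊆ closedBall x r) ∧
      (Pairwise fun m n ↦ Disjoint (closedBall (y m) ρ) (closedBall (y n) ρ)) ∧
      ∀ K, IsCompact K → {n | (closedBall (y n) ρ ∩ K).Nonempty}.Finite := by
  obtain ⟨ε, hε, y, hy, hsep⟩ := exists_separated_seq_of_not_totallyBounded h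
  have hr : 0 < r := by
    by_contra! hr
    exact h (by simp [ball_eq_empty.2 (by linarith : r / 2 ≤ 0)])
  refine ⟨min (ε / 3) (r / 2), by positivity, min_le_right _ _, y, fun n ↦ (hy n).1,
    fun n ↦ closedBall_subset_closedBall' ?_, fun m n hmn ↦ closedBall_disjoint_closedBall ?_,
    fun K hK ↦ finite_setOf_closedBall_inter_nonempty hsep ?_ hK⟩
  · linarith [min_le_right (ε / 3) (r / 2), mem_ball.1 (hy n).2]
  · linarith [min_le_left (ε / 3) (r / 2), hsep hmn]
  · linarith [min_le_left (ε / 3) (r / 2)]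

end PseudoMetric

namespace CantorScheme

variable {β α : Type*} {A : List β → Set α}

theorem isCompact_preimage_of_finite_children [TopologicalSpace α] [T2Space α]
    [TopologicalSpace β] [DiscreteTopology β] {f : (ℕ → β) → α} (hf : Continuous f)
    (hfA : ∀ x n, f x ∈ A (res x n)) {K : Set α} (hK : IsCompact K)
    (hfin : ∀ l, {b | (A (b :: l) ∩ K).Nonempty}.Finite) : IsCompact (f ⁻¹' K) := by
  have hres (n : ℕ) : ((fun x ↦ res x n) '' (f ⁻¹' K)).Finite := by
    induction n with
    | zero => exact (finite_singleton []).subset (by rintro _ ⟨x, -, rfl⟩; rfl)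
    | succ n ih =>
      refine (ih.biUnion fun l _ ↦ (hfin l).image (· :: l)).subset ?_
      rintro _ ⟨x, hx, rfl⟩
      exact mem_biUnion ⟨x, hx, rfl⟩ ⟨x n, ⟨f x, hfA x (n + 1), hx⟩, rfl⟩
  have hcoord (n : ℕ) : ((fun x ↦ x n) '' (f ⁻¹' K)).Finite := by
    refine (hres n).biUnion (fun l _ ↦ hfin l) |>.subset ?_
    rintro _ ⟨x, hx, rfl⟩
    exact mem_biUnion ⟨x, hx, rfl⟩ ⟨f x, hfA x (n + 1), hx⟩
  exact (isCompact_univ_pi fun n ↦ (hcoord n).isCompact).of_isClosed_subset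
    (hK.isClosed.preimage hf) fun x hx n _ ↦ ⟨x, hx, rfl⟩

theorem vanishingDiam_closedBall [PseudoMetricSpace α] {c : List β → α} {r : List β → ℝ}
    (hr : ∀ l, r l ≤ (1 / 2) ^ l.length) : VanishingDiam fun l ↦ closedBall (c l) (r l) := by
  intro x
  have hbound (n : ℕ) : ediam (closedBall (c (res x n)) (r (res x n))) ≤
      ENNReal.ofReal (2 * (1 / 2) ^ n) := by
    refine ediam_le_of_forall_dist_le fun a ha b hb ↦ ?_
    have := hr (res x n)
    rw [res_length] at this
    linarith [dist_triangle_right a b (c (res x n)), mem_closedBall.1 ha, mem_closedBall.1 hb]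
  refine tendsto_of_tendsto_of_tendsto_of_le_of_le tendsto_const_nhds ?_ (fun _ ↦ bot_le) hbound
  simpa using ENNReal.tendsto_ofReal ((tendsto_pow_atTop_nhds_zero_of_lt_one
    (by norm_num) (by norm_num : (1 / 2 : ℝ) < 1)).const_mul 2)

theorem exists_isClosedEmbedding [MetricSpace α] [CompleteSpace α] [TopologicalSpace β]
    [DiscreteTopology β] (hclosed : ∀ l, IsClosed (A l)) (hanti : CantorScheme.Antitone A)
    (hdisj : CantorScheme.Disjoint A) (hdiam : VanishingDiam A) (hne : ∀ l, (A l).Nonempty)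
    (hfin : ∀ l K, IsCompact K → {b | (A (b :: l) ∩ K).Nonempty}.Finite) :
    ∃ f : (ℕ → β) → α, IsClosedEmbedding f := by
  have hdom := (hanti.closureAntitone hclosed).map_of_vanishingDiam hdiam hne
  let f : (ℕ → β) → α := fun x ↦ (inducedMap A).2 ⟨x, hdom ▸ mem_univ x⟩
  have hf : Continuous f := hdiam.map_continuous.comp (by fun_prop)
  have hproper : IsProperMap f := isProperMap_iff_isCompact_preimage.2
    ⟨hf, fun K hK ↦ isCompact_preimage_of_finite_children hf (fun x ↦ map_mem _) hK
      (fun l ↦ hfin l K hK)⟩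
  exact ⟨f, .of_continuous_injective_isClosedMap hf
    (fun x y h ↦ congrArg Subtype.val (hdisj.map_injective h)) hproper.isClosedMap⟩

end CantorScheme

theorem exists_isClosedEmbedding_of_forall_not_totallyBounded {X : Type*} [MetricSpace X]
    [CompleteSpace X] {W : Set X} (hW : W.Nonempty)
    (h : ∀ x ∈ W, ∀ r > 0, ¬ TotallyBounded (W ∩ ball x r)) :
    ∃ f : (ℕ → ℕ) → X, IsClosedEmbedding f := by
  obtain ⟨w, hw⟩ := hW
  choose! ρ hρ hρr y hyW hysub hydisj hyfin using fun x (hx : x ∈ W) r (hr : 0 < r) ↦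
    exists_seq_closedBall_of_not_totallyBounded (h x hx (r / 2) (half_pos hr))
  -- `p (n :: l)` is the `n`-th child of `p l`, the order in which `PiNat.res` lists a branch.
  let p : List ℕ → X × ℝ := fun l ↦ l.foldr (fun n q ↦ (y q.1 q.2 n, ρ q.1 q.2)) (w, 1)
  have hp (l : List ℕ) : (p l).1 ∈ W ∧ 0 < (p l).2 ∧ (p l).2 ≤ (1 / 2) ^ l.length := by
    induction l with
    | nil => simp [p, hw]
    | cons n l ih =>
      obtain ⟨hW, hpos, hle⟩ := ih
      refine ⟨hyW _ hW _ hpos n, hρ _ hW _ hpos, ?_⟩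
      calc ρ (p l).1 (p l).2 ≤ (p l).2 / 2 := hρr _ hW _ hpos
        _ ≤ (1 / 2) ^ (n :: l).length := by rw [List.length_cons, pow_succ]; linarith
  exact CantorScheme.exists_isClosedEmbedding (A := fun l ↦ closedBall (p l).1 (p l).2)
    (fun _ ↦ isClosed_closedBall) (fun l n ↦ hysub _ (hp l).1 _ (hp l).2.1 n)
    (fun l m n hmn ↦ hydisj _ (hp l).1 _ (hp l).2.1 hmn)
    (CantorScheme.vanishingDiam_closedBall fun l ↦ (hp l).2.2)
    (fun l ↦ nonempty_closedBall.2 (hp l).2.1.le)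
    (fun l K hK ↦ hyfin _ (hp l).1 _ (hp l).2.1 K hK)

/-- Hurewicz: a Polish space is Kσ (a countable union of compact sets) iff it
contains no closed subset homeomorphic to Baire space. -/
theorem polish_ksigma_iff_no_closed_baire (X : Type*) [TopologicalSpace X]
    [PolishSpace X] :
    (∃ K : ℕ → Set X, (∀ n, IsCompact (K n)) ∧ ⋃ n, K n = Set.univ) ↔
    ¬ ∃ C : Set X, IsClosed C ∧ Nonempty (C ≃ₜ (ℕ → ℕ)) := by
  let := TopologicalSpace.upgradeIsCompletelyMetrizable X
  rw [← SigmaCompactSpace_iff_exists_compact_covering]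
  constructor
  · rintro hX ⟨C, hC, ⟨e⟩⟩
    exact not_sigmaCompactSpace_nat_pi
      (hC.isClosedEmbedding_subtypeVal.comp e.symm.isClosedEmbedding).sigmaCompactSpace
  · intro hC
    by_contra hX
    obtain ⟨W, hW, hWtb⟩ := exists_forall_not_totallyBounded_of_not_sigmaCompactSpace hX
    obtain ⟨f, hf⟩ := exists_isClosedEmbedding_of_forall_not_totallyBounded hW hWtb
    exact hC ⟨range f, hf.isClosed_range, ⟨hf.isEmbedding.toHomeomorph.symm⟩⟩
end

section
/- If f : X → Y is a pointwise limit of continuous functions between metric spaces (f is Baire class 1), then the preimage of every open set under f is an Fσ set. -/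
/-! If `fₙ → g` pointwise and `U = {φ > 0}` for a continuous `φ : Y → ℝ` (possible for every open
set of a perfectly normal space), then `g x ∈ U` iff some threshold `1 / (k + 1)` is eventually
below `φ (fₙ x)`. Thus `g ⁻¹' U = ⋃ k N, ⋂ n ≥ N, {x | 1 / (k + 1) ≤ φ (fₙ x)}`, and each set in
this countable union is closed because every `φ ∘ fₙ` is continuous. -/

open Filter Set Topology

theorem IsOpen.exists_continuous_preimage_Ioi {Y : Type*} [TopologicalSpace Y]
    [PerfectlyNormalSpace Y] {U : Set Y} (hU : IsOpen U) :
    ∃ φ : Y → ℝ, Continuous φ ∧ U = φ ⁻¹' Ioi 0 := by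
  obtain ⟨φ, hφU, hφ_mem⟩ :=
    perfectlyNormalSpace_iff_forall_isClosed_preimage_zero.mp ‹_› Uᶜ hU.isClosed_compl
  refine ⟨φ, φ.continuous, ext fun y => ?_⟩
  rw [← compl_compl U, hφU]
  simp only [mem_compl_iff, mem_preimage, mem_singleton_iff, mem_Ioi]
  exact (hφ_mem y).1.lt_iff_ne'.symm

theorem pos_iff_exists_eventually_one_div_le_of_tendsto {ι : Type*} {l : Filter ι} [l.NeBot]
    {u : ι → ℝ} {a : ℝ} (h : Tendsto u l (𝓝 a)) :
    0 < a ↔ ∃ k : ℕ, ∀ᶠ i in l, 1 / ((k : ℝ) + 1) ≤ u i := by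
  constructor
  · intro ha
    obtain ⟨k, hk⟩ := exists_nat_one_div_lt ha
    exact ⟨k, (h.eventually (lt_mem_nhds hk)).mono fun _ => le_of_lt⟩
  · rintro ⟨k, hk⟩
    exact Nat.one_div_pos_of_nat.trans_le (ge_of_tendsto h hk)

theorem setOf_pos_eq_iUnion_iInter_of_tendsto {X : Type*} {u : ℕ → X → ℝ} {v : X → ℝ}
    (h : ∀ x, Tendsto (fun n => u n x) atTop (𝓝 (v x))) :
    {x | 0 < v x} = ⋃ p : ℕ × ℕ, ⋂ n ≥ p.2, {x | 1 / ((p.1 : ℝ) + 1) ≤ u n x} := by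
  ext x
  simp only [mem_ofPred_eq, mem_iUnion, mem_iInter, Prod.exists,
    pos_iff_exists_eventually_one_div_le_of_tendsto (h x), eventually_atTop]

/-- If `f : X → Y` between metric spaces is a pointwise limit of continuous
functions (Baire class 1), then the preimage of every open set under `f` is an
Fσ set (a countable union of closed sets). -/
theorem baire_class_one_preimage_open_fsigma {X Y : Type*} [MetricSpace X]
    [MetricSpace Y] (f : ℕ → X → Y) (g : X → Y) (hf : ∀ n, Continuous (f n))
    (hconv : ∀ x, Filter.Tendsto (fun n => f n x) Filter.atTop (nhds (g x)))
    (U : Set Y) (hU : IsOpen U) :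
    ∃ F : ℕ → Set X, (∀ n, IsClosed (F n)) ∧ g ⁻¹' U = ⋃ n, F n := by
  obtain ⟨φ, hφ, rfl⟩ := hU.exists_continuous_preimage_Ioi
  have hφg := setOf_pos_eq_iUnion_iInter_of_tendsto fun x => (hφ.tendsto (g x)).comp (hconv x)
  refine ⟨fun n => ⋂ m ≥ (Nat.pairEquiv.symm n).2,
    {x | 1 / ((Nat.pairEquiv.symm n).1 + 1 : ℝ) ≤ φ (f m x)}, fun n => ?_, ?_⟩
  · exact isClosed_biInter fun m _ => isClosed_le continuous_const (hφ.comp (hf m))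
  · exact hφg.trans (Nat.pairEquiv.symm.surjective.iUnion_comp _).symm
end
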